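/- arXiv:0810.0789 — 4 statements merged into one kernel-verified Lean document; each statement's English description precedes it below -/
import Mathlib

section
/- The set of poles of the meromorphic function s ↦ 3^{-s}/(1 - 2·3^{-s}) on ℂ is exactly {log_3 2 + 2πim/log 3 : m ∈ ℤ}, and each pole is simple. -/
open Complex Filter

open scoped Topology

/-! The denominator `1 - 2·3^{-s}` vanishes exactly where `3^s = 2`, i.e. where
`s log 3 ∈ log 2 + 2πiℤ`; away from these points the quotient of entire functions is analytic.
At such a zero the derivative of the denominator is `2·3^{-s} log 3 = log 3 ≠ 0` while the
numerator is `1/2`, so `(z - ω) f(z) → 1/(2 log 3) ≠ 0`: a simple pole, which in particular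
rules out analyticity there. -/

section SimplePole

variable {𝕜 : Type*} [NontriviallyNormedField 𝕜]

theorem tendsto_sub_mul_div_of_hasDerivAt {g h : 𝕜 → 𝕜} {x h' : 𝕜} (hg : ContinuousAt g x)
    (hh : HasDerivAt h h' x) (hx : h x = 0) (hh' : h' ≠ 0) :
    Tendsto (fun z => (z - x) * (g z / h z)) (𝓝[≠] x) (𝓝 (g x / h')) := by
  have hslope : Tendsto (slope h x) (𝓝[≠] x) (𝓝 h') := hasDerivAt_iff_tendsto_slope.mp hh
  refine ((hg.tendsto.mono_left nhdsWithin_le_nhds).div hslope hh').congr fun z => ?_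
  rw [Pi.div_apply, slope_def_field, hx, sub_zero, div_div_eq_mul_div, mul_comm (g z),
    mul_div_assoc]

theorem not_continuousAt_of_tendsto_sub_mul {f : 𝕜 → 𝕜} {x c : 𝕜} (hc : c ≠ 0)
    (hf : Tendsto (fun z => (z - x) * f z) (𝓝[≠] x) (𝓝 c)) : ¬ ContinuousAt f x := by
  intro hcont
  have hzero : Tendsto (fun z => (z - x) * f z) (𝓝[≠] x) (𝓝 0) := by
    simpa using ((tendsto_id.sub_const x).mul hcont.tendsto).mono_left nhdsWithin_le_nhds
  exact hc (tendsto_nhds_unique hf hzero)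

end SimplePole

theorem Complex.ofReal_cpow_eq_ofReal_iff {a b : ℝ} (ha : 0 < a) (ha₁ : a ≠ 1) (hb : 0 < b)
    {s : ℂ} : (a : ℂ) ^ s = b ↔
      ∃ m : ℤ, s = Real.log b / Real.log a + 2 * Real.pi * I * m / Real.log a := by
  have hlog : (Real.log a : ℂ) ≠ 0 :=
    ofReal_ne_zero.mpr (Real.log_ne_zero_of_pos_of_ne_one ha ha₁)
  have hb' : (b : ℂ) = exp (Real.log b) := by rw [← ofReal_exp, Real.exp_log hb]
  rw [cpow_def_of_ne_zero (ofReal_ne_zero.mpr ha.ne'), ← ofReal_log ha.le, hb',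
    exp_eq_exp_iff_exists_int]
  refine exists_congr fun m => ?_
  rw [← add_div, eq_div_iff hlog]
  constructor <;> intro h <;> linear_combination h

theorem analyticAt_three_cpow_neg (s : ℂ) : AnalyticAt ℂ (fun z : ℂ => (3 : ℂ) ^ (-z)) s :=
  analyticAt_const.cpow analyticAt_id.neg (by norm_num)

theorem one_sub_two_mul_three_cpow_neg_eq_zero_iff (s : ℂ) :
    1 - 2 * (3 : ℂ) ^ (-s) = 0 ↔
      ∃ m : ℤ, s = Real.log 2 / Real.log 3 + 2 * Real.pi * I * m / Real.log 3 := by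
  have h := ofReal_cpow_eq_ofReal_iff (a := 3) (b := 2) (s := s) (by norm_num) (by norm_num)
    (by norm_num)
  rw [ofReal_ofNat, ofReal_ofNat] at h
  rw [← h, cpow_neg, sub_eq_zero, eq_comm, mul_inv_eq_one₀ (cpow_ne_zero_iff.mpr ?_), eq_comm]
  norm_num

theorem log_three_ne_zero : Complex.log 3 ≠ 0 := by
  rw [← ofReal_ofNat, ← ofReal_log (by norm_num), ofReal_ne_zero]
  exact Real.log_ne_zero_of_pos_of_ne_one (by norm_num) (by norm_num)

theorem tendsto_sub_mul_three_cpow_neg_div {ω : ℂ} (hω : 1 - 2 * (3 : ℂ) ^ (-ω) = 0) :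
    Tendsto (fun z : ℂ => (z - ω) * ((3 : ℂ) ^ (-z) / (1 - 2 * (3 : ℂ) ^ (-z)))) (𝓝[≠] ω)
      (𝓝 (1 / (2 * Complex.log 3))) := by
  have hderiv : HasDerivAt (fun z : ℂ => 1 - 2 * (3 : ℂ) ^ (-z)) (Complex.log 3) ω := by
    refine ((((hasDerivAt_neg ω).const_cpow (Or.inl three_ne_zero)).const_mul 2).const_sub 1
      ).congr_deriv ?_
    linear_combination -Complex.log 3 * hω
  convert tendsto_sub_mul_div_of_hasDerivAt (analyticAt_three_cpow_neg ω).continuousAt hderiv hω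
    log_three_ne_zero using 2
  rw [show (3 : ℂ) ^ (-ω) = 1 / 2 by linear_combination -hω / 2]
  ring

/-- The set of poles of `s ↦ 3^{-s}/(1 - 2·3^{-s})` is exactly
`{log₃ 2 + 2πim/log 3 : m ∈ ℤ}`, and each pole is simple. -/
theorem cantor_string_complex_dimensions :
    ({s : ℂ | ¬ AnalyticAt ℂ (fun z : ℂ => (3 : ℂ) ^ (-z) / (1 - 2 * (3 : ℂ) ^ (-z))) s}
      = {s : ℂ | ∃ m : ℤ, s = Real.log 2 / Real.log 3
          + 2 * Real.pi * Complex.I * m / Real.log 3}) ∧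
    ∀ ω : ℂ, (∃ m : ℤ, ω = Real.log 2 / Real.log 3
        + 2 * Real.pi * Complex.I * m / Real.log 3) →
      ∃ c : ℂ, c ≠ 0 ∧
        Tendsto (fun z : ℂ => (z - ω) * ((3 : ℂ) ^ (-z) / (1 - 2 * (3 : ℂ) ^ (-z))))
          (nhdsWithin ω {ω}ᶜ) (nhds c) := by
  have hres : (1 / (2 * Complex.log 3) : ℂ) ≠ 0 := by simp [log_three_ne_zero]
  refine ⟨Set.ext fun s => ?_, fun ω hω => ?_⟩
  · rw [Set.mem_ofPred_eq, Set.mem_ofPred_eq, ← one_sub_two_mul_three_cpow_neg_eq_zero_iff]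
    refine ⟨fun hsing => by_contra fun hden => hsing ?_, fun hden hanalytic => ?_⟩
    · exact (analyticAt_three_cpow_neg s).div
        (analyticAt_const.sub (analyticAt_const.mul (analyticAt_three_cpow_neg s))) hden
    · exact not_continuousAt_of_tendsto_sub_mul hres
        (tendsto_sub_mul_three_cpow_neg_div hden) hanalytic.continuousAt
  · rw [← one_sub_two_mul_three_cpow_neg_eq_zero_iff] at hω
    exact ⟨_, hres, tendsto_sub_mul_three_cpow_neg_div hω⟩
end

section
/- For a fractal string Ω ⊆ [0,1] that is a countable union of disjoint open intervals with lengths ℓ_j summing to at most 1, the Minkowski dimension of the boundary ∂Ω equals inf{σ ∈ ℝ : Σ_j ℓ_j^σ < ∞}, provided ∂Ω = Ω^c in [0,1]. -/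
/-!
Write `ℓ j = b j - a j` and `V ε` for the volume of the inner `ε`-tube. The endpoints of the
intervals lie in `∂Ω`, so each interval meets the tube in at most `2 min(ε, ℓ j)`, while an
interval with `ℓ j ≤ ε` lies in the tube entirely. Since `min(ε, ℓ) ≤ ℓ ^ σ ε ^ (1 - σ)`, a
convergence exponent `σ ≤ 1` gives `V ε ≤ 2 ε ^ (1 - σ) ∑ ℓ j ^ σ`, so `σ` is admissible for
the Minkowski dimension. Conversely, `V ε ≤ C ε ^ (1 - d)` bounds `∑_{ℓ j ≤ ε} ℓ j`; grouping the
lengths dyadically, `∑ ℓ j ^ σ ≤ ∑ₙ 2 ^ (n (1 - σ)) ∑_{ℓ j ≤ 2 ^ -n} ℓ j` up to constants, a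
geometric series for `d < σ ≤ 1`. Exponents above `1` do not matter, as `1` lies in both sets.
-/

open MeasureTheory Filter Set Topology Function
open scoped ENNReal

theorem min_mul_rpow_le_rpow {ε ℓ σ : ℝ} (hε : 0 < ε) (hℓ : 0 ≤ ℓ) (hσ₀ : 0 ≤ σ) (hσ₁ : σ ≤ 1) :
    min ε ℓ * ε ^ (σ - 1) ≤ ℓ ^ σ := by
  have hm : 0 ≤ min ε ℓ := le_min hε.le hℓ
  have hsplit : min ε ℓ ≤ ℓ ^ σ * ε ^ (1 - σ) :=
    calc min ε ℓ = min ε ℓ ^ σ * min ε ℓ ^ (1 - σ) := by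
          rw [← Real.rpow_add' hm (by norm_num), add_sub_cancel, Real.rpow_one]
      _ ≤ ℓ ^ σ * ε ^ (1 - σ) :=
          mul_le_mul (Real.rpow_le_rpow hm (min_le_right _ _) hσ₀)
            (Real.rpow_le_rpow hm (min_le_left _ _) (by linarith)) (by positivity) (by positivity)
  calc min ε ℓ * ε ^ (σ - 1) ≤ ℓ ^ σ * ε ^ (1 - σ) * ε ^ (σ - 1) := by gcongr
    _ = ℓ ^ σ := by rw [mul_assoc, ← Real.rpow_add hε]; norm_num

theorem ofReal_rpow_le_dyadic {ℓ r σ : ℝ} (hℓ : 0 < ℓ) (hr : 0 < r) (hσ : σ ≤ 1) :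
    ENNReal.ofReal (ℓ ^ σ) ≤ ENNReal.ofReal (r ^ (σ - 1)) * ENNReal.ofReal ℓ +
      ∑' n : ℕ, ENNReal.ofReal (2 ^ (1 - σ) * (r / 2 ^ n) ^ (σ - 1)) *
        if ℓ ≤ r / 2 ^ n then ENNReal.ofReal ℓ else 0 := by
  have hsplit : ENNReal.ofReal (ℓ ^ σ) = ENNReal.ofReal (ℓ ^ (σ - 1)) * ENNReal.ofReal ℓ := by
    rw [← ENNReal.ofReal_mul (by positivity), ← Real.rpow_add_one hℓ.ne', sub_add_cancel]
  rw [hsplit]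
  rcases lt_or_ge r ℓ with hrℓ | hℓr
  · refine le_add_right (mul_le_mul_left ?_ _)
    exact ENNReal.ofReal_le_ofReal (Real.rpow_le_rpow_of_nonpos hr hrℓ.le (by linarith))
  · obtain ⟨n, hn, hn'⟩ := exists_nat_pow_near (one_le_div hℓ |>.2 hℓr) one_lt_two
    have hle : ℓ ≤ r / 2 ^ n := by
      rw [le_div_iff₀ (by positivity)]; rwa [le_div_iff₀ hℓ, mul_comm] at hn
    have hlt : r / 2 ^ n < 2 * ℓ := by
      rw [div_lt_iff₀ (by positivity)]; rw [div_lt_iff₀ hℓ, pow_succ] at hn'; linarith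
    have hpow : ℓ ^ (σ - 1) ≤ 2 ^ (1 - σ) * (r / 2 ^ n) ^ (σ - 1) :=
      calc ℓ ^ (σ - 1) = 2 ^ (1 - σ) * (2 * ℓ) ^ (σ - 1) := by
            rw [Real.mul_rpow zero_le_two hℓ.le, ← mul_assoc, ← Real.rpow_add zero_lt_two]
            norm_num
        _ ≤ 2 ^ (1 - σ) * (r / 2 ^ n) ^ (σ - 1) := mul_le_mul_of_nonneg_left
            (Real.rpow_le_rpow_of_nonpos (by positivity) hlt.le (by linarith)) (by positivity)
    refine le_add_left (le_trans ?_ (ENNReal.le_tsum n))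
    rw [if_pos hle]
    exact mul_le_mul_left (ENNReal.ofReal_le_ofReal hpow) _

theorem summable_div_two_pow_rpow {r s : ℝ} (hr : 0 ≤ r) (hs : 0 < s) :
    Summable fun n : ℕ => (r / 2 ^ n) ^ s := by
  have hq : (2 ^ s : ℝ)⁻¹ < 1 := inv_lt_one_of_one_lt₀ (Real.one_lt_rpow one_lt_two hs)
  refine ((summable_geometric_of_lt_one (by positivity) hq).mul_left (r ^ s)).congr fun n => ?_
  rw [Real.div_rpow hr (by positivity), ← Real.rpow_pow_comm zero_le_two, inv_pow, div_eq_mul_inv]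

section Lengths

variable {ι : Type*}

noncomputable def sumLengthsLE (ℓ : ι → ℝ) (t : ℝ) : ℝ≥0∞ :=
  ∑' i, if ℓ i ≤ t then ENNReal.ofReal (ℓ i) else 0

theorem summable_of_tsum_ofReal_ne_top {f : ι → ℝ} (hf : ∀ i, 0 ≤ f i)
    (h : ∑' i, ENNReal.ofReal (f i) ≠ ⊤) : Summable f :=
  (ENNReal.summable_toReal h).congr fun i => ENNReal.toReal_ofReal (hf i)

theorem pos_of_summable_rpow [Infinite ι] {ℓ : ι → ℝ} (hℓ : ∀ i, 0 < ℓ i)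
    (hℓ₀ : Tendsto ℓ cofinite (𝓝 0)) {σ : ℝ} (hσ : Summable fun i => ℓ i ^ σ) : 0 < σ := by
  by_contra! hσ₀
  obtain ⟨i, hi₁, hiσ⟩ := ((hℓ₀.eventually_lt_const one_pos).and
    (hσ.tendsto_cofinite_zero.eventually_lt_const one_pos)).exists
  exact hiσ.not_ge (Real.one_le_rpow_of_pos_of_le_one_of_nonpos (hℓ i) hi₁.le hσ₀)

theorem summable_rpow_of_sumLengthsLE_le {ℓ : ι → ℝ} (hℓ : ∀ i, 0 < ℓ i) (hsum : Summable ℓ)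
    {C : ℝ≥0∞} (hC : C ≠ ⊤) {d σ : ℝ} (hdσ : d < σ) (hσ : σ ≤ 1)
    (h : ∀ᶠ t in 𝓝[>] 0, sumLengthsLE ℓ t ≤ C * ENNReal.ofReal (t ^ (1 - d))) :
    Summable fun i => ℓ i ^ σ := by
  obtain ⟨r, hr : 0 < r, hrC⟩ := mem_nhdsGT_iff_exists_Ioc_subset.1 h
  set c : ℕ → ℝ := fun n => 2 ^ (1 - σ) * (r / 2 ^ n) ^ (σ - 1)
  have hdyadic : ∑' i, ENNReal.ofReal (ℓ i ^ σ) ≤ ENNReal.ofReal (r ^ (σ - 1)) *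
      ∑' i, ENNReal.ofReal (ℓ i) + ∑' n, ENNReal.ofReal (c n) * sumLengthsLE ℓ (r / 2 ^ n) :=
    calc ∑' i, ENNReal.ofReal (ℓ i ^ σ)
        ≤ ∑' i, (ENNReal.ofReal (r ^ (σ - 1)) * ENNReal.ofReal (ℓ i) + ∑' n, ENNReal.ofReal (c n) *
            if ℓ i ≤ r / 2 ^ n then ENNReal.ofReal (ℓ i) else 0) :=
          ENNReal.tsum_le_tsum fun i => ofReal_rpow_le_dyadic (hℓ i) hr hσ
      _ = _ := by
          rw [ENNReal.tsum_add, ENNReal.tsum_mul_left, ENNReal.tsum_comm]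
          simp only [ENNReal.tsum_mul_left, sumLengthsLE]
  have hterm : ∀ n, ENNReal.ofReal (c n) * sumLengthsLE ℓ (r / 2 ^ n) ≤
      C * ENNReal.ofReal (2 ^ (1 - σ) * (r / 2 ^ n) ^ (σ - d)) := by
    intro n
    have hrn : 0 < r / 2 ^ n := by positivity
    calc ENNReal.ofReal (c n) * sumLengthsLE ℓ (r / 2 ^ n)
        ≤ ENNReal.ofReal (c n) * (C * ENNReal.ofReal ((r / 2 ^ n) ^ (1 - d))) := by
          gcongr
          exact hrC ⟨hrn, div_le_self hr.le (one_le_pow₀ one_le_two)⟩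
      _ = C * ENNReal.ofReal (2 ^ (1 - σ) * (r / 2 ^ n) ^ (σ - d)) := by
          rw [mul_left_comm, ← ENNReal.ofReal_mul (by positivity), mul_assoc,
            ← Real.rpow_add hrn]
          ring_nf
  have hfinite : ∑' n, ENNReal.ofReal (c n) * sumLengthsLE ℓ (r / 2 ^ n) ≠ ⊤ := by
    refine ne_top_of_le_ne_top ?_ (ENNReal.tsum_le_tsum hterm)
    rw [ENNReal.tsum_mul_left]
    exact ENNReal.mul_ne_top hC
      ((summable_div_two_pow_rpow hr.le (sub_pos.2 hdσ)).mul_left _).tsum_ofReal_ne_top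
  refine summable_of_tsum_ofReal_ne_top (fun i => (Real.rpow_pos_of_pos (hℓ i) σ).le) ?_
  exact ne_top_of_le_ne_top (ENNReal.add_ne_top.2 ⟨ENNReal.mul_ne_top ENNReal.ofReal_ne_top
    hsum.tsum_ofReal_ne_top, hfinite⟩) hdyadic

end Lengths

theorem frontier_subset_frontier_iUnion {ι X : Type*} [TopologicalSpace X] {s : ι → Set X}
    (hs : ∀ i, IsOpen (s i)) (hd : Pairwise (Disjoint on s)) (i : ι) :
    frontier (s i) ⊆ frontier (⋃ j, s j) := by
  rw [(hs i).frontier_eq, (isOpen_iUnion hs).frontier_eq]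
  rintro x ⟨hxi, hxsi⟩
  refine ⟨closure_mono (subset_iUnion s i) hxi, fun hx => ?_⟩
  obtain ⟨j, hxj⟩ := mem_iUnion.1 hx
  have hji : j ≠ i := by rintro rfl; exact hxsi hxj
  obtain ⟨y, hyj, hyi⟩ := mem_closure_iff.1 hxi (s j) (hs j) hxj
  exact (hd hji).ne_of_mem hyj hyi rfl

namespace FractalString

variable {ι : Type*}

def carrier (a b : ι → ℝ) : Set ℝ := ⋃ i, Ioo (a i) (b i)

def innerTube (a b : ι → ℝ) (ε : ℝ) : Set ℝ :=
  {x ∈ carrier a b | Metric.infDist x (frontier (carrier a b)) < ε}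

noncomputable def upperMinkowskiContent (a b : ι → ℝ) (d : ℝ) : ℝ≥0∞ :=
  limsup (fun ε => volume (innerTube a b ε) * ENNReal.ofReal (ε ^ (d - 1))) (𝓝[>] 0)

variable {a b : ι → ℝ}

theorem isOpen_carrier : IsOpen (carrier a b) :=
  isOpen_iUnion fun _ => isOpen_Ioo

theorem endpoints_mem_frontier (hab : ∀ i, a i < b i)
    (hdisj : Pairwise (Disjoint on fun i => Ioo (a i) (b i))) (i : ι) :
    a i ∈ frontier (carrier a b) ∧ b i ∈ frontier (carrier a b) := by
  have h := frontier_subset_frontier_iUnion (fun i => isOpen_Ioo) hdisj i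
  rw [frontier_Ioo (hab i)] at h
  exact ⟨h (mem_insert _ _), h (mem_insert_of_mem _ rfl)⟩

theorem volume_innerTube_le [Countable ι] (hab : ∀ i, a i < b i)
    (hdisj : Pairwise (Disjoint on fun i => Ioo (a i) (b i))) (ε : ℝ) :
    volume (innerTube a b ε) ≤ 2 * ∑' i, ENNReal.ofReal (min ε (b i - a i)) := by
  have hcover : innerTube a b ε ⊆
      ⋃ i, Ioo (a i) (min (a i + ε) (b i)) ∪ Ioo (max (b i - ε) (a i)) (b i) := by
    rintro x ⟨hxΩ, hxε⟩
    obtain ⟨i, hxi⟩ := mem_iUnion.1 hxΩ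
    obtain ⟨y, hyF, hxy⟩ :=
      (Metric.infDist_lt_iff ⟨a i, (endpoints_mem_frontier hab hdisj i).1⟩).1 hxε
    have hyi : y ∉ Ioo (a i) (b i) := fun hy =>
      disjoint_left.1 (disjoint_frontier_iff_isOpen.2 isOpen_carrier) hyF (mem_iUnion.2 ⟨i, hy⟩)
    rw [Real.dist_eq, abs_lt] at hxy
    rw [mem_Ioo, not_and_or, not_lt, not_lt] at hyi
    refine mem_iUnion.2 ⟨i, ?_⟩
    rcases hyi with hy | hy
    · exact Or.inl ⟨hxi.1, lt_min (by linarith) hxi.2⟩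
    · exact Or.inr ⟨max_lt (by linarith) hxi.1, hxi.2⟩
  refine (measure_mono hcover).trans ((measure_iUnion_le _).trans ?_)
  rw [← ENNReal.tsum_mul_left]
  refine ENNReal.tsum_le_tsum fun i => (measure_union_le _ _).trans_eq ?_
  rw [Real.volume_Ioo, Real.volume_Ioo, ← min_sub_sub_right, ← min_sub_sub_left, two_mul]
  ring_nf

theorem sumLengthsLE_le_volume_innerTube [Countable ι] (hab : ∀ i, a i < b i)
    (hdisj : Pairwise (Disjoint on fun i => Ioo (a i) (b i))) (ε : ℝ) :
    sumLengthsLE (fun i => b i - a i) ε ≤ volume (innerTube a b ε) := by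
  set S := {i | b i - a i ≤ ε}
  have hsub : ⋃ i ∈ S, Ioo (a i) (b i) ⊆ innerTube a b ε := by
    refine iUnion₂_subset fun i hi x hx => ⟨mem_iUnion.2 ⟨i, hx⟩, ?_⟩
    calc Metric.infDist x (frontier (carrier a b)) ≤ dist x (a i) :=
          Metric.infDist_le_dist_of_mem (endpoints_mem_frontier hab hdisj i).1
      _ = x - a i := by rw [Real.dist_eq, abs_of_pos (sub_pos.2 hx.1)]
      _ < ε := by linarith [hx.2, show b i - a i ≤ ε from hi]
  calc sumLengthsLE (fun i => b i - a i) ε = ∑' i : S, volume (Ioo (a i) (b i)) := by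
        rw [tsum_subtype S fun i => volume (Ioo (a i) (b i))]
        simp [sumLengthsLE, indicator_apply, S]
    _ = volume (⋃ i ∈ S, Ioo (a i) (b i)) :=
        (measure_biUnion S.to_countable (hdisj.set_pairwise S) fun _ _ => measurableSet_Ioo).symm
    _ ≤ volume (innerTube a b ε) := measure_mono hsub

theorem upperMinkowskiContent_lt_top_of_summable [Countable ι] (hab : ∀ i, a i < b i)
    (hdisj : Pairwise (Disjoint on fun i => Ioo (a i) (b i))) {σ : ℝ} (hσ₀ : 0 ≤ σ)
    (hσ₁ : σ ≤ 1) (hsum : Summable fun i => (b i - a i) ^ σ) :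
    upperMinkowskiContent a b σ < ⊤ := by
  have hbound : ∀ ε ∈ Ioi (0 : ℝ), volume (innerTube a b ε) * ENNReal.ofReal (ε ^ (σ - 1)) ≤
      2 * ∑' i, ENNReal.ofReal ((b i - a i) ^ σ) := by
    intro ε hε
    have hℓ : ∀ i, 0 ≤ b i - a i := fun i => (sub_pos.2 (hab i)).le
    calc volume (innerTube a b ε) * ENNReal.ofReal (ε ^ (σ - 1))
        ≤ (2 * ∑' i, ENNReal.ofReal (min ε (b i - a i))) * ENNReal.ofReal (ε ^ (σ - 1)) := by
          gcongr
          exact volume_innerTube_le hab hdisj ε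
      _ = 2 * ∑' i, ENNReal.ofReal (min ε (b i - a i) * ε ^ (σ - 1)) := by
          simp only [mul_assoc, ← ENNReal.tsum_mul_right,
            ENNReal.ofReal_mul (le_min (le_of_lt hε) (hℓ _))]
      _ ≤ 2 * ∑' i, ENNReal.ofReal ((b i - a i) ^ σ) := by
          gcongr with i
          exact min_mul_rpow_le_rpow hε (hℓ i) hσ₀ hσ₁
  exact (limsup_le_of_le (by isBoundedDefault) (eventually_nhdsWithin_of_forall hbound)).trans_lt
    (ENNReal.mul_lt_top (by norm_num) hsum.tsum_ofReal_lt_top)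

theorem summable_rpow_of_upperMinkowskiContent_lt_top [Countable ι] (hab : ∀ i, a i < b i)
    (hdisj : Pairwise (Disjoint on fun i => Ioo (a i) (b i))) (hsum : Summable fun i => b i - a i)
    {d σ : ℝ} (hd : upperMinkowskiContent a b d < ⊤) (hdσ : d < σ) (hσ : σ ≤ 1) :
    Summable fun i => (b i - a i) ^ σ := by
  obtain ⟨C, hdC, hC⟩ := exists_between hd
  refine summable_rpow_of_sumLengthsLE_le (fun i => sub_pos.2 (hab i)) hsum hC.ne hdσ hσ ?_
  filter_upwards [eventually_lt_of_limsup_lt hdC, self_mem_nhdsWithin] with ε hε (hε₀ : 0 < ε)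
  calc sumLengthsLE (fun i => b i - a i) ε ≤ volume (innerTube a b ε) :=
        sumLengthsLE_le_volume_innerTube hab hdisj ε
    _ = volume (innerTube a b ε) * ENNReal.ofReal (ε ^ (d - 1)) * ENNReal.ofReal (ε ^ (1 - d)) := by
        rw [mul_assoc, ← ENNReal.ofReal_mul (by positivity), ← Real.rpow_add hε₀]
        norm_num
    _ ≤ C * ENNReal.ofReal (ε ^ (1 - d)) := by gcongr

end FractalString

open FractalString in
theorem minkowski_dimension_eq_abscissa_of_convergence_general
    (a b : ℕ → ℝ) (hab : ∀ j, a j < b j)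
    (hdisj : Pairwise (Function.onFun Disjoint (fun j => Ioo (a j) (b j))))
    (hsum : Summable (fun j => b j - a j)) :
    sInf {d : ℝ | 0 ≤ d ∧
        limsup (fun ε : ℝ =>
            volume {x ∈ ⋃ j, Ioo (a j) (b j) |
              Metric.infDist x (frontier (⋃ j, Ioo (a j) (b j))) < ε}
            * ENNReal.ofReal (ε ^ (d - 1)))
          (nhdsWithin 0 (Ioi 0)) < ⊤}
      = sInf {σ : ℝ | Summable (fun j => (b j - a j) ^ σ)} := by
  change sInf {d : ℝ | 0 ≤ d ∧ upperMinkowskiContent a b d < ⊤} = _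
  have hone : Summable fun j => (b j - a j) ^ (1 : ℝ) := by simpa only [Real.rpow_one] using hsum
  have hpos : ∀ σ : ℝ, Summable (fun j => (b j - a j) ^ σ) → 0 < σ := fun _ =>
    pos_of_summable_rpow (fun j => sub_pos.2 (hab j)) hsum.tendsto_cofinite_zero
  have hmem : ∀ σ : ℝ, Summable (fun j => (b j - a j) ^ σ) → σ ≤ 1 →
      0 ≤ σ ∧ upperMinkowskiContent a b σ < ⊤ := fun σ hσ hσ₁ =>
    ⟨(hpos σ hσ).le, upperMinkowskiContent_lt_top_of_summable hab hdisj (hpos σ hσ).le hσ₁ hσ⟩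
  have hbddD : BddBelow {d : ℝ | 0 ≤ d ∧ upperMinkowskiContent a b d < ⊤} := ⟨0, fun _ hd => hd.1⟩
  have hbddS : BddBelow {σ : ℝ | Summable fun j => (b j - a j) ^ σ} :=
    ⟨0, fun σ hσ => (hpos σ hσ).le⟩
  apply le_antisymm
  · refine le_csInf ⟨1, hone⟩ fun σ hσ => ?_
    rcases le_total σ 1 with hσ₁ | hσ₁
    · exact csInf_le hbddD (hmem σ hσ hσ₁)
    · exact (csInf_le hbddD (hmem 1 hone le_rfl)).trans hσ₁
  · refine le_csInf ⟨1, hmem 1 hone le_rfl⟩ fun d ⟨_, hd⟩ =>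
      le_of_forall_gt_imp_ge_of_dense fun σ hdσ => ?_
    rcases le_total σ 1 with hσ₁ | hσ₁
    · exact csInf_le hbddS (summable_rpow_of_upperMinkowskiContent_lt_top hab hdisj hsum hd hdσ hσ₁)
    · exact (csInf_le hbddS hone).trans hσ₁

/-- For a fractal string `Ω ⊆ [0,1]`, a countable disjoint union of open
intervals `(a j, b j)` with lengths summing to at most 1, whose boundary
equals its complement in `[0,1]`, the Minkowski dimension of `∂Ω`
(defined via the inner tube volumes `V(ε)`) equals the abscissa of
convergence `inf {σ : ∑_j ℓ_j^σ < ∞}` of the lengths. -/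
theorem minkowski_dimension_eq_abscissa_of_convergence
    (a b : ℕ → ℝ) (hab : ∀ j, a j < b j)
    (hsub : (⋃ j, Ioo (a j) (b j)) ⊆ Icc 0 1)
    (hdisj : Pairwise (Function.onFun Disjoint (fun j => Ioo (a j) (b j))))
    (hsum : Summable (fun j => b j - a j))
    (hsum1 : ∑' j, (b j - a j) ≤ 1)
    (hbd : frontier (⋃ j, Ioo (a j) (b j)) = Icc 0 1 \ ⋃ j, Ioo (a j) (b j)) :
    sInf {d : ℝ | 0 ≤ d ∧
        limsup (fun ε : ℝ =>
            volume {x ∈ ⋃ j, Ioo (a j) (b j) |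
              Metric.infDist x (frontier (⋃ j, Ioo (a j) (b j))) < ε}
            * ENNReal.ofReal (ε ^ (d - 1)))
          (nhdsWithin 0 (Ioi 0)) < ⊤}
      = sInf {σ : ℝ | Summable (fun j => (b j - a j) ^ σ)} :=
  minkowski_dimension_eq_abscissa_of_convergence_general a b hab hdisj hsum
end

section
/- The abscissa of convergence of the Dirichlet series Σ_{n=1}^∞ C(nk₂, nk₁) 3^{-k₂ns} (for coprime 0 < k₁ < k₂) equals (1/(k₂ log 3)) · [k₁ log(k₂/k₁) + (k₂−k₁) log(k₂/(k₂−k₁))], i.e., the normalized binary-entropy-type expression H(k₁/k₂)/log 3 where H(p) = −p log p − (1−p) log(1−p). -/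
/-!
Write `H` for the binary entropy of `k₁ / k₂`, and `N = n k₂`, `K = n k₁`. The binomial
expansion of `N ^ N = (K + (N - K)) ^ N` has `N + 1` nonnegative terms, the largest of which
is the `K`-th one, `C(N, K) K ^ K (N - K) ^ (N - K) = C(N, K) N ^ N / exp (N H)`. Hence
`exp (n k₂ H) / (n k₂ + 1) ≤ C(n k₂, n k₁) ≤ exp (n k₂ H)`, so the `n`-th term of the series
is `exp (n k₂ (H - σ log 3))` up to a factor between `1 / (n k₂ + 1)` and `1`. It converges
geometrically when `σ log 3 > H` and dominates a multiple of the harmonic series otherwise,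
so the set of convergence is exactly the open half-line `(H / log 3, ∞)`.
-/

open Finset Real

namespace Nat

def binomialWeight (N K j : ℕ) : ℕ := N.choose j * (K ^ j * (N - K) ^ (N - j))

variable {N K j : ℕ}

theorem sum_binomialWeight (hKN : K ≤ N) :
    ∑ j ∈ range (N + 1), binomialWeight N K j = N ^ N := by
  have hsplit : N ^ N = (K + (N - K)) ^ N := by rw [Nat.add_sub_cancel' hKN]
  rw [hsplit, add_pow]
  exact sum_congr rfl fun j _ => by rw [binomialWeight, Nat.cast_id]; ring

-- The ratio of consecutive weights is `K (N - j) / ((j + 1) (N - K))`, at most `1` once `j ≥ K`.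
theorem binomialWeight_succ_le (hKj : K ≤ j) :
    binomialWeight N K (j + 1) ≤ binomialWeight N K j := by
  rcases lt_or_ge j N with hjN | hNj
  · refine Nat.le_of_mul_le_mul_right ?_ j.succ_pos
    have hsucc : N - j = N - (j + 1) + 1 := by omega
    have hratio : K * (N - j) ≤ (j + 1) * (N - K) := Nat.mul_le_mul (by omega) (by omega)
    calc binomialWeight N K (j + 1) * (j + 1)
        = N.choose j * (K ^ j * (N - K) ^ (N - (j + 1))) * (K * (N - j)) := by
          rw [binomialWeight, mul_right_comm, choose_succ_right_eq, pow_succ]; ring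
      _ ≤ N.choose j * (K ^ j * (N - K) ^ (N - (j + 1))) * ((j + 1) * (N - K)) :=
          Nat.mul_le_mul_left _ hratio
      _ = binomialWeight N K j * (j + 1) := by rw [binomialWeight, hsucc, pow_succ]; ring
  · simp [binomialWeight, choose_eq_zero_of_lt (Nat.lt_succ_of_le hNj)]

theorem binomialWeight_le_of_le (hKj : K ≤ j) : binomialWeight N K j ≤ binomialWeight N K K := by
  induction j, hKj using Nat.le_induction with
  | base => rfl
  | succ j hKj ih => exact (binomialWeight_succ_le hKj).trans ih

theorem binomialWeight_sub_sub (hKN : K ≤ N) (hjN : j ≤ N) :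
    binomialWeight N (N - K) (N - j) = binomialWeight N K j := by
  rw [binomialWeight, binomialWeight, choose_symm hjN, Nat.sub_sub_self hKN,
    Nat.sub_sub_self hjN, mul_comm ((N - K) ^ _)]

theorem binomialWeight_le (hKN : K ≤ N) (hjN : j ≤ N) :
    binomialWeight N K j ≤ binomialWeight N K K := by
  rcases le_total K j with hKj | hjK
  · exact binomialWeight_le_of_le hKj
  · rw [← binomialWeight_sub_sub hKN hjN, ← binomialWeight_sub_sub hKN hKN]
    exact binomialWeight_le_of_le (by omega)

theorem choose_mul_pow_mul_pow_le_pow (hKN : K ≤ N) :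
    N.choose K * (K ^ K * (N - K) ^ (N - K)) ≤ N ^ N := by
  rw [← sum_binomialWeight hKN]
  exact single_le_sum (f := binomialWeight N K) (fun _ _ => Nat.zero_le _)
    (mem_range.mpr (Nat.lt_succ_of_le hKN))

theorem pow_le_succ_mul_choose_mul_pow_mul_pow (hKN : K ≤ N) :
    N ^ N ≤ (N + 1) * (N.choose K * (K ^ K * (N - K) ^ (N - K))) := by
  rw [← sum_binomialWeight hKN]
  calc ∑ j ∈ range (N + 1), binomialWeight N K j
      ≤ ∑ _j ∈ range (N + 1), binomialWeight N K K :=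
        sum_le_sum fun j hj => binomialWeight_le hKN (Nat.lt_succ_iff.mp (mem_range.mp hj))
    _ = (N + 1) * binomialWeight N K K := by rw [sum_const, card_range, smul_eq_mul]

end Nat

theorem Real.mul_binEntropy_div {x y : ℝ} (hy : y ≠ 0) :
    y * binEntropy (x / y) = x * log (y / x) + (y - x) * log (y / (y - x)) := by
  rw [binEntropy, one_sub_div hy, inv_div, inv_div]
  field_simp

theorem Real.exp_natCast_mul_log {x : ℝ} (hx : 0 < x) (n : ℕ) : exp (n * log x) = x ^ n := by
  rw [← log_pow, exp_log (pow_pos hx n)]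

section

variable {N K : ℕ}

theorem exp_mul_binEntropy_mul_pow_mul_pow (hK : 0 < K) (hKN : K < N) :
    exp (N * binEntropy (K / N)) * ((K : ℝ) ^ K * ((N - K : ℕ) : ℝ) ^ (N - K)) = (N : ℝ) ^ N := by
  have hcast : ((N - K : ℕ) : ℝ) = N - K := Nat.cast_sub hKN.le
  have hK' : (0 : ℝ) < K := by exact_mod_cast hK
  have hN : (0 : ℝ) < N := by exact_mod_cast hK.trans hKN
  have hNK : (0 : ℝ) < (N - K : ℕ) := by exact_mod_cast Nat.sub_pos_of_lt hKN
  rw [mul_binEntropy_div hN.ne', ← hcast, exp_add, exp_natCast_mul_log (div_pos hN hK'),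
    exp_natCast_mul_log (div_pos hN hNK), div_pow, div_pow]
  field_simp
  rw [← pow_add, Nat.add_sub_cancel' hKN.le]

theorem Nat.choose_le_exp_mul_binEntropy (hK : 0 < K) (hKN : K < N) :
    (N.choose K : ℝ) ≤ exp (N * binEntropy (K / N)) := by
  have hP : (0 : ℝ) < (K : ℝ) ^ K * ((N - K : ℕ) : ℝ) ^ (N - K) := by
    have := Nat.sub_pos_of_lt hKN
    positivity
  refine le_of_mul_le_mul_right ?_ hP
  rw [exp_mul_binEntropy_mul_pow_mul_pow hK hKN]
  exact_mod_cast Nat.choose_mul_pow_mul_pow_le_pow hKN.le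

theorem Nat.exp_mul_binEntropy_le_succ_mul_choose (hK : 0 < K) (hKN : K < N) :
    exp (N * binEntropy (K / N)) ≤ (N + 1) * N.choose K := by
  have hP : (0 : ℝ) < (K : ℝ) ^ K * ((N - K : ℕ) : ℝ) ^ (N - K) := by
    have := Nat.sub_pos_of_lt hKN
    positivity
  refine le_of_mul_le_mul_right ?_ hP
  rw [exp_mul_binEntropy_mul_pow_mul_pow hK hKN, mul_assoc]
  exact_mod_cast Nat.pow_le_succ_mul_choose_mul_pow_mul_pow hKN.le

end

theorem summable_iff_neg_of_exp_bounds {a : ℕ → ℝ} {c d : ℝ} (hd : 0 ≤ d)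
    (hupper : ∀ n : ℕ, a n ≤ exp ((n + 1) * c))
    (hlower : ∀ n : ℕ, exp ((n + 1) * c) ≤ (d * (n + 1) + 1) * a n) :
    Summable a ↔ c < 0 := by
  have hpos (n : ℕ) : 0 < a n :=
    pos_of_mul_pos_right ((exp_pos _).trans_le (hlower n)) (by positivity)
  constructor
  · intro hsum
    by_contra! hc
    have hharmonic (n : ℕ) : (d + 1)⁻¹ * (1 / ((n + 1 : ℕ) : ℝ)) ≤ a n := by
      have hexp : 1 ≤ exp ((n + 1) * c) := one_le_exp (by positivity)
      rw [← div_eq_inv_mul, div_div, div_le_iff₀ (by positivity)]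
      push_cast
      nlinarith [hlower n, hpos n]
    refine not_summable_one_div_natCast ((summable_nat_add_iff 1).mp ?_)
    refine (summable_mul_left_iff (inv_ne_zero (by positivity : d + 1 ≠ 0))).mp ?_
    exact hsum.of_nonneg_of_le (fun n => by positivity) hharmonic
  · intro hc
    refine Summable.of_nonneg_of_le (fun n => (hpos n).le) (fun n => (hupper n).trans_eq ?_)
      ((summable_geometric_of_lt_one (exp_pos c).le (exp_lt_one_iff.mpr hc)).mul_left (exp c))
    rw [← exp_nat_mul, ← exp_add]
    ring_nf

theorem summable_choose_mul_rpow_iff {b : ℝ} (hb : 1 < b) {k₁ k₂ : ℕ} (hk₁ : 0 < k₁)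
    (hk : k₁ < k₂) (σ : ℝ) :
    Summable (fun n : ℕ => (Nat.choose ((n + 1) * k₂) ((n + 1) * k₁) : ℝ)
        * b ^ (-(k₂ : ℝ) * (n + 1) * σ)) ↔ binEntropy (k₁ / k₂) / log b < σ := by
  have hk₂ : (0 : ℝ) < k₂ := by exact_mod_cast hk₁.trans hk
  set H := binEntropy (k₁ / k₂)
  have hrescale (n : ℕ) :
      (((n + 1) * k₂ : ℕ) : ℝ) * binEntropy (((n + 1) * k₁ : ℕ) / ((n + 1) * k₂ : ℕ))
        = (n + 1) * (k₂ * H) := by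
    push_cast
    rw [mul_div_mul_left _ _ (by positivity), mul_assoc]
  have hrpow (n : ℕ) : b ^ (-(k₂ : ℝ) * (n + 1) * σ) * exp ((n + 1) * (k₂ * H))
      = exp ((n + 1) * (k₂ * (H - σ * log b))) := by
    rw [rpow_def_of_pos (zero_lt_one.trans hb), ← exp_add]
    ring_nf
  have hKN (n : ℕ) : (n + 1) * k₁ < (n + 1) * k₂ := Nat.mul_lt_mul_of_pos_left hk n.succ_pos
  rw [summable_iff_neg_of_exp_bounds (c := k₂ * (H - σ * log b)) hk₂.le]
  · rw [← mul_zero (k₂ : ℝ), mul_lt_mul_iff_right₀ hk₂, sub_neg, div_lt_iff₀ (log_pos hb)]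
  · intro n
    rw [← hrpow, mul_comm (b ^ _)]
    refine mul_le_mul_of_nonneg_right ?_ (rpow_nonneg (zero_le_one.trans hb.le) _)
    rw [← hrescale]
    exact Nat.choose_le_exp_mul_binEntropy (Nat.mul_pos n.succ_pos hk₁) (hKN n)
  · intro n
    rw [← hrpow, mul_comm (b ^ _), ← mul_assoc ((k₂ : ℝ) * (n + 1) + 1)]
    refine mul_le_mul_of_nonneg_right ?_ (rpow_nonneg (zero_le_one.trans hb.le) _)
    have hsucc : (((n + 1) * k₂ : ℕ) : ℝ) + 1 = k₂ * (n + 1) + 1 := by push_cast; ring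
    rw [← hrescale, ← hsucc]
    exact Nat.exp_mul_binEntropy_le_succ_mul_choose (Nat.mul_pos n.succ_pos hk₁) (hKN n)

theorem partition_zeta_abscissa_general (k₁ k₂ : ℕ) (h0 : 0 < k₁) (hk : k₁ < k₂) :
    sInf {σ : ℝ | Summable (fun n : ℕ =>
        (Nat.choose ((n + 1) * k₂) ((n + 1) * k₁) : ℝ)
          * (3 : ℝ) ^ (-(k₂ : ℝ) * (n + 1) * σ))}
      = (1 / ((k₂ : ℝ) * Real.log 3)) *
          ((k₁ : ℝ) * Real.log ((k₂ : ℝ) / k₁)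
            + ((k₂ : ℝ) - k₁) * Real.log ((k₂ : ℝ) / ((k₂ : ℝ) - k₁))) := by
  have hk₂ : (k₂ : ℝ) ≠ 0 := by exact_mod_cast (h0.trans hk).ne'
  have hconvergent : {σ : ℝ | Summable (fun n : ℕ =>
      (Nat.choose ((n + 1) * k₂) ((n + 1) * k₁) : ℝ) * (3 : ℝ) ^ (-(k₂ : ℝ) * (n + 1) * σ))}
      = Set.Ioi (binEntropy (k₁ / k₂) / log 3) :=
    Set.ext (summable_choose_mul_rpow_iff (by norm_num) h0 hk)
  rw [hconvergent, csInf_Ioi, ← mul_binEntropy_div hk₂, one_div_mul_eq_div, mul_comm (k₂ : ℝ),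
    ← div_div, mul_div_cancel_right₀ _ hk₂]

/-- The abscissa of convergence of `∑_{n≥1} C(nk₂, nk₁) 3^{-k₂ns}` for coprime
`0 < k₁ < k₂` equals
`(1/(k₂ log 3)) · [k₁ log(k₂/k₁) + (k₂−k₁) log(k₂/(k₂−k₁))]`. -/
theorem partition_zeta_abscissa (k₁ k₂ : ℕ) (h0 : 0 < k₁) (hk : k₁ < k₂)
    (hcop : Nat.Coprime k₁ k₂) :
    sInf {σ : ℝ | Summable (fun n : ℕ =>
        (Nat.choose ((n + 1) * k₂) ((n + 1) * k₁) : ℝ)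
          * (3 : ℝ) ^ (-(k₂ : ℝ) * (n + 1) * σ))}
      = (1 / ((k₂ : ℝ) * Real.log 3)) *
          ((k₁ : ℝ) * Real.log ((k₂ : ℝ) / k₁)
            + ((k₂ : ℝ) - k₁) * Real.log ((k₂ : ℝ) / ((k₂ : ℝ) - k₁))) :=
  partition_zeta_abscissa_general k₁ k₂ h0 hk
end

section
/- The Cantor string is not Minkowski measurable: the limit lim_{ε→0⁺} V(ε) ε^{D−1}, with D = log_3 2 and V(ε) the volume of the inner ε-neighborhood of the Cantor set within the Cantor string, does not exist. -/
/-!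
Write `V(ε)` for the tube volume and `D = log₃ 2`. Since `C = C/3 ∪ (2 + C)/3`, for `ε ≤ 1/6`
the tube consists of two copies of the `3ε`-tube scaled by `1/3` together with the two intervals
of length `ε` at the ends of the middle gap `(1/3, 2/3)`, so `V(ε) = 2ε + (2/3) V(3ε)`; for
`ε > 1/6` the tube is all of `Ω`, which has measure `1` because `C` is null.
As `3^D = 2`, the recursion makes `p(ε) = V(ε) ε^(D-1) + 2 ε^D` invariant under `ε ↦ 3ε`.
If `V(ε) ε^(D-1)` had a limit `L` at `0⁺`, so would `p` (as `ε^D → 0`), and invariance would force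
`p = L` on `(0, 1/2]`. But `p(1/3) = 5/2 < 4 / 2^D = p(1/2)`, because `2^D < 2^(2/3) < 8/5`.
-/

open MeasureTheory Filter Set

/-- The inner tube volume of the Cantor string: the Lebesgue measure of the
ε-neighborhood of the Cantor set within `Ω = (0,1) \ C`. -/
noncomputable def cantorStringTubeVolume (ε : ℝ) : ℝ :=
  (volume {x ∈ Ioo (0 : ℝ) 1 \ cantorSet | Metric.infDist x cantorSet < ε}).toReal

open Metric Topology

lemma one_mem_preCantorSet (n : ℕ) : (1 : ℝ) ∈ preCantorSet n := by
  induction n with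
  | zero => simp
  | succ n ih => exact Or.inr ⟨1, ih, by norm_num⟩

lemma one_mem_cantorSet : (1 : ℝ) ∈ cantorSet := mem_iInter.mpr one_mem_preCantorSet

lemma cantorSet_subset_Icc_union_Icc : cantorSet ⊆ Icc (0 : ℝ) (1 / 3) ∪ Icc (2 / 3) 1 := by
  intro x hx
  rw [cantorSet_eq_union_halves] at hx
  rcases hx with ⟨y, hy, rfl⟩ | ⟨y, hy, rfl⟩ <;> obtain ⟨h0, h1⟩ := cantorSet_subset_unitInterval hy
  · exact Or.inl ⟨by linarith, by linarith⟩
  · exact Or.inr ⟨by linarith, by linarith⟩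

lemma div_three_mem_cantorSet {x : ℝ} (hx : x ∈ cantorSet) : x / 3 ∈ cantorSet := by
  rw [cantorSet_eq_union_halves]
  exact Or.inl ⟨x, hx, rfl⟩

lemma two_add_div_three_mem_cantorSet {x : ℝ} (hx : x ∈ cantorSet) : (2 + x) / 3 ∈ cantorSet := by
  rw [cantorSet_eq_union_halves]
  exact Or.inr ⟨x, hx, rfl⟩

lemma one_third_mem_cantorSet : (1 / 3 : ℝ) ∈ cantorSet :=
  div_three_mem_cantorSet one_mem_cantorSet

lemma two_thirds_mem_cantorSet : (2 / 3 : ℝ) ∈ cantorSet := by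
  simpa using two_add_div_three_mem_cantorSet zero_mem_cantorSet

lemma div_three_mem_cantorSet_iff {x : ℝ} (hx : x ≤ 1) : x / 3 ∈ cantorSet ↔ x ∈ cantorSet := by
  refine ⟨fun h => ?_, div_three_mem_cantorSet⟩
  rw [cantorSet_eq_union_halves] at h
  rcases h with ⟨y, hy, hyx⟩ | ⟨y, hy, hyx⟩
  · rwa [show y = x by linarith] at hy
  · linarith [(cantorSet_subset_unitInterval hy).1]

lemma two_add_div_three_mem_cantorSet_iff {x : ℝ} (hx : 0 ≤ x) :
    (2 + x) / 3 ∈ cantorSet ↔ x ∈ cantorSet := by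
  refine ⟨fun h => ?_, two_add_div_three_mem_cantorSet⟩
  rw [cantorSet_eq_union_halves] at h
  rcases h with ⟨y, hy, hyx⟩ | ⟨y, hy, hyx⟩
  · linarith [(cantorSet_subset_unitInterval hy).2]
  · rwa [show y = x by linarith] at hy

lemma image_div_three_eq_preimage (s : Set ℝ) : (· / 3) '' s = (3 * ·) ⁻¹' s :=
  congrFun (image_eq_preimage_of_inverse (f := (· / 3)) (g := (3 * ·))
    (fun x => by simp only; ring) fun x => by simp only; ring) s

lemma image_two_add_div_three_eq_preimage (s : Set ℝ) :
    (fun x => (2 + x) / 3) '' s = (fun x => 3 * x - 2) ⁻¹' s :=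
  congrFun (image_eq_preimage_of_inverse (f := fun x => (2 + x) / 3) (g := fun x => 3 * x - 2)
    (fun x => by simp only; ring) fun x => by simp only; ring) s

lemma volume_preimage_three_mul (s : Set ℝ) : volume ((3 * ·) ⁻¹' s) = 3⁻¹ * volume s := by
  rw [Real.volume_preimage_mul_left three_ne_zero, abs_of_pos (by norm_num),
    ENNReal.ofReal_inv_of_pos three_pos, ENNReal.ofReal_ofNat]

lemma volume_preimage_three_mul_sub_two (s : Set ℝ) :
    volume ((fun x => 3 * x - 2) ⁻¹' s) = 3⁻¹ * volume s := by
  rw [show (fun x => 3 * x - 2) ⁻¹' s = (3 * ·) ⁻¹' ((· + -2) ⁻¹' s) by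
    ext; simp [sub_eq_add_neg], volume_preimage_three_mul, measure_preimage_add_right]

lemma volume_cantorSet : volume cantorSet = 0 := by
  have hfin : volume cantorSet ≠ ⊤ :=
    measure_ne_top_of_subset cantorSet_subset_unitInterval (by simp)
  have h : volume cantorSet ≤ 3⁻¹ * volume cantorSet + 3⁻¹ * volume cantorSet :=
    calc volume cantorSet
        ≤ volume ((3 * ·) ⁻¹' cantorSet) + volume ((fun x => 3 * x - 2) ⁻¹' cantorSet) := by
          conv_lhs => rw [cantorSet_eq_union_halves, image_div_three_eq_preimage,
            image_two_add_div_three_eq_preimage]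
          exact measure_union_le _ _
      _ = 3⁻¹ * volume cantorSet + 3⁻¹ * volume cantorSet := by
          rw [volume_preimage_three_mul, volume_preimage_three_mul_sub_two]
  have h' := ENNReal.toReal_mono (by finiteness) h
  rw [ENNReal.toReal_add (by finiteness) (by finiteness), ENNReal.toReal_mul] at h'
  norm_num at h'
  have h0 : (volume cantorSet).toReal = 0 := le_antisymm (by linarith) ENNReal.toReal_nonneg
  exact ((ENNReal.toReal_eq_zero_iff _).mp h0).resolve_right hfin

lemma cantorSet_nonempty : cantorSet.Nonempty := ⟨0, zero_mem_cantorSet⟩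

lemma dist_div_three (x y : ℝ) : dist (x / 3) (y / 3) = dist x y / 3 := by
  rw [Real.dist_eq, Real.dist_eq, ← sub_div, abs_div, abs_of_pos (by norm_num : (0 : ℝ) < 3)]

lemma dist_two_add_div_three (x y : ℝ) : dist ((2 + x) / 3) ((2 + y) / 3) = dist x y / 3 := by
  rw [← dist_div_three, add_div, add_div, dist_add_left]

lemma infDist_div_three_cantorSet {x : ℝ} (hx : x ≤ 1) :
    infDist (x / 3) cantorSet = infDist x cantorSet / 3 := by
  apply le_antisymm
  · rw [le_div_iff₀ three_pos]
    refine (le_infDist cantorSet_nonempty).mpr fun z hz => ?_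
    rw [← le_div_iff₀ three_pos, ← dist_div_three]
    exact infDist_le_dist_of_mem (div_three_mem_cantorSet hz)
  · refine (le_infDist cantorSet_nonempty).mpr fun y hy => ?_
    rw [cantorSet_eq_union_halves] at hy
    rcases hy with ⟨z, hz, rfl⟩ | ⟨z, hz, rfl⟩
    · rw [dist_div_three]
      gcongr
      exact infDist_le_dist_of_mem hz
    · -- `y` lies in the right copy, so it is farther from `x / 3` than `1 / 3`, the image of `1`.
      dsimp only
      have h1 := infDist_le_dist_of_mem (x := x) one_mem_cantorSet
      rw [Real.dist_eq, abs_of_nonpos (by linarith)] at h1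
      have hz0 := (cantorSet_subset_unitInterval hz).1
      rw [Real.dist_eq, abs_of_nonpos (by linarith)]
      linarith

lemma infDist_two_add_div_three_cantorSet {x : ℝ} (hx : 0 ≤ x) :
    infDist ((2 + x) / 3) cantorSet = infDist x cantorSet / 3 := by
  apply le_antisymm
  · rw [le_div_iff₀ three_pos]
    refine (le_infDist cantorSet_nonempty).mpr fun z hz => ?_
    rw [← le_div_iff₀ three_pos, ← dist_two_add_div_three]
    exact infDist_le_dist_of_mem (two_add_div_three_mem_cantorSet hz)
  · refine (le_infDist cantorSet_nonempty).mpr fun y hy => ?_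
    rw [cantorSet_eq_union_halves] at hy
    rcases hy with ⟨z, hz, rfl⟩ | ⟨z, hz, rfl⟩
    · have h0 := infDist_le_dist_of_mem (x := x) zero_mem_cantorSet
      have hz1 := (cantorSet_subset_unitInterval hz).2
      rw [Real.dist_eq, sub_zero, abs_of_nonneg hx] at h0
      rw [Real.dist_eq, abs_of_nonneg (by linarith)]
      linarith
    · rw [dist_two_add_div_three]
      gcongr
      exact infDist_le_dist_of_mem hz

lemma infDist_cantorSet_eq_min {x : ℝ} (hx : x ∈ Icc (1 / 3 : ℝ) (2 / 3)) :
    infDist x cantorSet = min (x - 1 / 3) (2 / 3 - x) := by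
  obtain ⟨h1, h2⟩ := hx
  apply le_antisymm
  · refine le_min ?_ ?_
    · have h := infDist_le_dist_of_mem (x := x) one_third_mem_cantorSet
      rwa [Real.dist_eq, abs_of_nonneg (by linarith)] at h
    · have h := infDist_le_dist_of_mem (x := x) two_thirds_mem_cantorSet
      rwa [Real.dist_eq, abs_of_nonpos (by linarith), neg_sub] at h
  · refine (le_infDist cantorSet_nonempty).mpr fun y hy => ?_
    rw [Real.dist_eq]
    rcases cantorSet_subset_Icc_union_Icc hy with ⟨-, hy⟩ | ⟨hy, -⟩
    · exact (min_le_left _ _).trans (by rw [abs_of_nonneg (by linarith)]; linarith)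
    · exact (min_le_right _ _).trans (by rw [abs_of_nonpos (by linarith)]; linarith)

lemma infDist_cantorSet_le_one_sixth {x : ℝ} (hx : x ∈ Icc (0 : ℝ) 1) :
    infDist x cantorSet ≤ 1 / 6 := by
  obtain ⟨h0, h1⟩ := hx
  have key : ∀ y ∈ cantorSet, |x - y| ≤ 1 / 6 → infDist x cantorSet ≤ 1 / 6 :=
    fun y hy hxy => (infDist_le_dist_of_mem hy).trans (by rwa [Real.dist_eq])
  rcases le_total x (1 / 6) with h | h
  · exact key 0 zero_mem_cantorSet (by rw [abs_le]; constructor <;> linarith)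
  rcases le_total x (1 / 2) with h' | h'
  · exact key (1 / 3) one_third_mem_cantorSet (by rw [abs_le]; constructor <;> linarith)
  rcases le_total x (5 / 6) with h'' | h''
  · exact key (2 / 3) two_thirds_mem_cantorSet (by rw [abs_le]; constructor <;> linarith)
  · exact key 1 one_mem_cantorSet (by rw [abs_le]; constructor <;> linarith)

noncomputable def cantorStringTube (ε : ℝ) : Set ℝ :=
  {x ∈ Ioo (0 : ℝ) 1 \ cantorSet | infDist x cantorSet < ε}

lemma mem_cantorStringTube {ε x : ℝ} :
    x ∈ cantorStringTube ε ↔ (x ∈ Ioo 0 1 ∧ x ∉ cantorSet) ∧ infDist x cantorSet < ε :=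
  Iff.rfl

lemma cantorStringTube_inter_Iio (ε : ℝ) :
    cantorStringTube ε ∩ Iio (1 / 3) = (3 * ·) ⁻¹' cantorStringTube (3 * ε) := by
  ext x
  obtain ⟨y, rfl⟩ : ∃ y, x = y / 3 := ⟨3 * x, by ring⟩
  simp only [mem_cantorStringTube, mem_inter_iff, mem_Ioo, mem_Iio,
    mem_preimage, mul_div_cancel₀ y three_ne_zero]
  constructor
  · rintro ⟨⟨⟨⟨h0, -⟩, hC⟩, hd⟩, h1⟩
    rw [div_three_mem_cantorSet_iff (by linarith)] at hC
    rw [infDist_div_three_cantorSet (by linarith)] at hd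
    exact ⟨⟨⟨by linarith, by linarith⟩, hC⟩, by linarith⟩
  · rintro ⟨⟨⟨h0, h1⟩, hC⟩, hd⟩
    rw [div_three_mem_cantorSet_iff h1.le, infDist_div_three_cantorSet h1.le]
    exact ⟨⟨⟨⟨by linarith, by linarith⟩, hC⟩, by linarith⟩, by linarith⟩

lemma cantorStringTube_inter_Ioi (ε : ℝ) :
    cantorStringTube ε ∩ Ioi (2 / 3) = (fun x => 3 * x - 2) ⁻¹' cantorStringTube (3 * ε) := by
  ext x
  obtain ⟨y, rfl⟩ : ∃ y, x = (2 + y) / 3 := ⟨3 * x - 2, by ring⟩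
  simp only [mem_cantorStringTube, mem_inter_iff, mem_Ioo, mem_Ioi,
    mem_preimage, show 3 * ((2 + y) / 3) - 2 = y by ring]
  constructor
  · rintro ⟨⟨⟨⟨-, h1⟩, hC⟩, hd⟩, h0⟩
    rw [two_add_div_three_mem_cantorSet_iff (by linarith)] at hC
    rw [infDist_two_add_div_three_cantorSet (by linarith)] at hd
    exact ⟨⟨⟨by linarith, by linarith⟩, hC⟩, by linarith⟩
  · rintro ⟨⟨⟨h0, h1⟩, hC⟩, hd⟩
    rw [two_add_div_three_mem_cantorSet_iff h0.le, infDist_two_add_div_three_cantorSet h0.le]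
    exact ⟨⟨⟨⟨by linarith, by linarith⟩, hC⟩, by linarith⟩, by linarith⟩

lemma cantorStringTube_inter_Ioo {ε : ℝ} (hε : ε ≤ 1 / 3) :
    cantorStringTube ε ∩ Ioo (1 / 3) (2 / 3) =
      Ioo (1 / 3) (1 / 3 + ε) ∪ Ioo (2 / 3 - ε) (2 / 3) := by
  ext x
  simp only [mem_cantorStringTube, mem_inter_iff, mem_Ioo, mem_union]
  constructor
  · rintro ⟨⟨-, hd⟩, h1, h2⟩
    rw [infDist_cantorSet_eq_min ⟨h1.le, h2.le⟩, min_lt_iff] at hd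
    rcases hd with hd | hd
    · exact Or.inl ⟨h1, by linarith⟩
    · exact Or.inr ⟨by linarith, h2⟩
  · intro hx
    have h1 : 1 / 3 < x := by rcases hx with ⟨h, -⟩ | ⟨h, -⟩ <;> linarith
    have h2 : x < 2 / 3 := by rcases hx with ⟨-, h⟩ | ⟨-, h⟩ <;> linarith
    refine ⟨⟨⟨⟨by linarith, by linarith⟩, fun hC => ?_⟩, ?_⟩, h1, h2⟩
    · rcases cantorSet_subset_Icc_union_Icc hC with ⟨-, h⟩ | ⟨h, -⟩ <;> linarith
    · rw [infDist_cantorSet_eq_min ⟨h1.le, h2.le⟩, min_lt_iff]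
      rcases hx with ⟨-, h⟩ | ⟨h, -⟩
      · exact Or.inl (by linarith)
      · exact Or.inr (by linarith)

lemma cantorStringTube_of_one_sixth_lt {ε : ℝ} (hε : 1 / 6 < ε) :
    cantorStringTube ε = Ioo 0 1 \ cantorSet :=
  sep_eq_self_iff_mem_true.mpr fun _ hx =>
    (infDist_cantorSet_le_one_sixth (Ioo_subset_Icc_self hx.1)).trans_lt hε

lemma measure_eq_inter_Iio_add_inter_Ioi {α : Type*} [LinearOrder α] [TopologicalSpace α]
    [OrderClosedTopology α] [MeasurableSpace α] [OpensMeasurableSpace α] (μ : Measure α)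
    [NullSingletonClass μ] (s : Set α) (a : α) : μ s = μ (s ∩ Iio a) + μ (s ∩ Ioi a) := by
  rw [← measure_inter_add_sdiff s measurableSet_Iio, sdiff_eq, compl_Iio]
  exact congrArg _ (measure_congr ((ae_eq_refl s).inter Ioi_ae_eq_Ici).symm)

lemma measure_eq_inter_Iio_add_inter_Ioo_add_inter_Ioi {α : Type*} [LinearOrder α]
    [TopologicalSpace α] [OrderClosedTopology α] [MeasurableSpace α] [OpensMeasurableSpace α]
    (μ : Measure α) [NullSingletonClass μ] (s : Set α) {a b : α} (hab : a ≤ b) :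
    μ s = μ (s ∩ Iio a) + μ (s ∩ Ioo a b) + μ (s ∩ Ioi b) := by
  rw [measure_eq_inter_Iio_add_inter_Ioi μ s a, measure_eq_inter_Iio_add_inter_Ioi μ (s ∩ Ioi a) b,
    inter_assoc, inter_assoc, Ioi_inter_Iio, Ioi_inter_Ioi, sup_eq_right.mpr hab, add_assoc]

lemma volume_cantorStringTube_of_le {ε : ℝ} (hε0 : 0 ≤ ε) (hε : ε ≤ 1 / 6) :
    volume (cantorStringTube ε) =
      ENNReal.ofReal (2 * ε) + 2 * 3⁻¹ * volume (cantorStringTube (3 * ε)) := by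
  have hdisj : Disjoint (Ioo (1 / 3 : ℝ) (1 / 3 + ε)) (Ioo (2 / 3 - ε) (2 / 3)) :=
    disjoint_left.mpr fun x hx hx' => by linarith [hx.2, hx'.1]
  rw [measure_eq_inter_Iio_add_inter_Ioo_add_inter_Ioi volume _ (by norm_num : (1 / 3 : ℝ) ≤ 2 / 3),
    cantorStringTube_inter_Iio, cantorStringTube_inter_Ioo (by linarith),
    cantorStringTube_inter_Ioi, volume_preimage_three_mul, volume_preimage_three_mul_sub_two,
    measure_union hdisj measurableSet_Ioo,
    Real.volume_Ioo, Real.volume_Ioo, ← ENNReal.ofReal_add (by linarith) (by linarith)]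
  ring_nf

lemma cantorStringTubeVolume_def (ε : ℝ) :
    cantorStringTubeVolume ε = (volume (cantorStringTube ε)).toReal :=
  rfl

lemma cantorStringTubeVolume_of_le {ε : ℝ} (hε0 : 0 ≤ ε) (hε : ε ≤ 1 / 6) :
    cantorStringTubeVolume ε = 2 * ε + 2 / 3 * cantorStringTubeVolume (3 * ε) := by
  have hfin : volume (cantorStringTube (3 * ε)) ≠ ⊤ :=
    measure_ne_top_of_subset (fun _ hx => hx.1.1) (by simp : volume (Ioo (0 : ℝ) 1) ≠ ⊤)
  rw [cantorStringTubeVolume_def, cantorStringTubeVolume_def, volume_cantorStringTube_of_le hε0 hε,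
    ENNReal.toReal_add (by finiteness) (by finiteness), ENNReal.toReal_mul,
    ENNReal.toReal_ofReal (by linarith)]
  norm_num

lemma cantorStringTubeVolume_of_one_sixth_lt {ε : ℝ} (hε : 1 / 6 < ε) :
    cantorStringTubeVolume ε = 1 := by
  rw [cantorStringTubeVolume_def, cantorStringTube_of_one_sixth_lt hε,
    measure_sdiff_null volume_cantorSet, Real.volume_Ioo]
  norm_num

lemma logb_three_two_pos : 0 < Real.logb 3 2 :=
  Real.logb_pos (by norm_num : (1 : ℝ) < 3) (by norm_num)

noncomputable def cantorStringPeriodicPart (ε : ℝ) : ℝ :=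
  cantorStringTubeVolume ε * ε ^ (Real.logb 3 2 - 1) + 2 * ε ^ Real.logb 3 2

lemma cantorStringPeriodicPart_three_mul {ε : ℝ} (hε0 : 0 < ε) (hε : ε ≤ 1 / 6) :
    cantorStringPeriodicPart (3 * ε) = cantorStringPeriodicPart ε := by
  have h3 : (3 * ε) ^ Real.logb 3 2 = 2 * ε ^ Real.logb 3 2 := by
    rw [Real.mul_rpow (by norm_num) hε0.le,
      Real.rpow_logb (by norm_num) (by norm_num) (by norm_num)]
  simp only [cantorStringPeriodicPart, Real.rpow_sub_one hε0.ne',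
    Real.rpow_sub_one (by positivity : 3 * ε ≠ 0), h3, cantorStringTubeVolume_of_le hε0.le hε]
  field_simp
  ring

lemma cantorStringPeriodicPart_div_three_pow {a : ℝ} (ha0 : 0 < a) (ha : a ≤ 1 / 2) (n : ℕ) :
    cantorStringPeriodicPart (a / 3 ^ n) = cantorStringPeriodicPart a := by
  induction n with
  | zero => simp
  | succ n ih =>
    have hle : a / 3 ^ (n + 1) ≤ 1 / 6 := by
      calc a / 3 ^ (n + 1) ≤ a / 3 :=
            div_le_div_of_nonneg_left ha0.le (by norm_num) (le_self_pow₀ (by norm_num) (by omega))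
        _ ≤ 1 / 6 := by linarith
    rw [← ih, ← cantorStringPeriodicPart_three_mul (by positivity) hle, pow_succ]
    field_simp

lemma cantorStringPeriodicPart_of_one_sixth_lt {a : ℝ} (ha : 1 / 6 < a) :
    cantorStringPeriodicPart a = (a⁻¹ + 2) * a ^ Real.logb 3 2 := by
  rw [cantorStringPeriodicPart, cantorStringTubeVolume_of_one_sixth_lt ha,
    Real.rpow_sub_one (by positivity)]
  ring

lemma tendsto_cantorStringPeriodicPart {L : ℝ}
    (hL : Tendsto (fun ε => cantorStringTubeVolume ε * ε ^ (Real.logb 3 2 - 1)) (𝓝[>] 0) (𝓝 L)) :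
    Tendsto cantorStringPeriodicPart (𝓝[>] 0) (𝓝 L) := by
  have h : Tendsto (fun ε : ℝ => ε ^ Real.logb 3 2) (𝓝[>] 0) (𝓝 0) := by
    have := (Real.continuousAt_rpow_const 0 _ (Or.inr logb_three_two_pos.le)).tendsto
    rw [Real.zero_rpow logb_three_two_pos.ne'] at this
    exact this.mono_left nhdsWithin_le_nhds
  have h' := hL.add (h.const_mul 2)
  rwa [mul_zero, add_zero] at h'

lemma cantorStringPeriodicPart_eq_of_tendsto {L : ℝ}
    (hL : Tendsto cantorStringPeriodicPart (𝓝[>] 0) (𝓝 L)) {a : ℝ} (ha0 : 0 < a) (ha : a ≤ 1 / 2) :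
    cantorStringPeriodicPart a = L := by
  have hseq : Tendsto (fun n : ℕ => a / 3 ^ n) atTop (𝓝[>] 0) := by
    simpa [div_eq_mul_inv, inv_pow] using Filter.TendstoNhdsWithinIoi.const_mul ha0
      (tendsto_pow_atTop_nhdsWithin_zero_of_lt_one (by norm_num : (0 : ℝ) < 3⁻¹) (by norm_num))
  refine tendsto_nhds_unique ?_ (hL.comp hseq)
  simp only [Function.comp_def, cantorStringPeriodicPart_div_three_pow ha0 ha]
  exact tendsto_const_nhds

lemma two_rpow_logb_three_two_lt : (2 : ℝ) ^ Real.logb 3 2 < 8 / 5 := by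
  have hD : Real.logb 3 2 < 2 / 3 := by
    rw [Real.logb, div_lt_iff₀ (Real.log_pos (by norm_num))]
    have := Real.log_lt_log (by norm_num) (by norm_num : (2 : ℝ) ^ 3 < 3 ^ 2)
    rw [Real.log_pow, Real.log_pow] at this
    push_cast at this
    linarith
  have h4 : ((2 : ℝ) ^ (2 / 3 : ℝ)) ^ 3 < (8 / 5) ^ 3 := by
    rw [← Real.rpow_natCast, ← Real.rpow_mul (by norm_num)]
    norm_num
  exact (Real.rpow_lt_rpow_of_exponent_lt (by norm_num) hD).trans
    (lt_of_pow_lt_pow_left₀ 3 (by norm_num) h4)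

lemma cantorStringPeriodicPart_one_third_lt_one_half :
    cantorStringPeriodicPart (1 / 3) < cantorStringPeriodicPart (1 / 2) := by
  have h2 : (0 : ℝ) < 2 ^ Real.logb 3 2 := by positivity
  rw [cantorStringPeriodicPart_of_one_sixth_lt (by norm_num),
    cantorStringPeriodicPart_of_one_sixth_lt (by norm_num),
    Real.div_rpow zero_le_one (by norm_num), Real.div_rpow zero_le_one (by norm_num),
    Real.rpow_logb (by norm_num) (by norm_num) (by norm_num)]
  rw [Real.one_rpow, mul_one_div, mul_one_div, lt_div_iff₀ h2]
  linarith [two_rpow_logb_three_two_lt]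

/-- The Cantor string is not Minkowski measurable: with `D = log₃ 2`, the
limit `lim_{ε→0⁺} V(ε) ε^{D−1}` does not exist. -/
theorem cantor_string_not_minkowski_measurable :
    ¬ ∃ L : ℝ, Tendsto
        (fun ε : ℝ => cantorStringTubeVolume ε * ε ^ (Real.log 2 / Real.log 3 - 1))
        (nhdsWithin 0 (Ioi 0)) (nhds L) := by
  rintro ⟨L, hL⟩
  -- `Real.logb 3 2` unfolds to `Real.log 2 / Real.log 3`, so `hL` fits the lemma as it stands.
  have hp : ∀ a ∈ Ioc (0 : ℝ) (1 / 2), cantorStringPeriodicPart a = L := fun _ ha =>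
    cantorStringPeriodicPart_eq_of_tendsto (tendsto_cantorStringPeriodicPart hL) ha.1 ha.2
  exact cantorStringPeriodicPart_one_third_lt_one_half.ne
    ((hp (1 / 3) (by norm_num)).trans (hp (1 / 2) (by norm_num)).symm)
end
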